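/- arXiv:1407.6815 — 2 statements merged into one kernel-verified Lean document; each statement's English description precedes it below -/
import Mathlib

section
/- In lightlike coordinates on the Minkowski plane (so ‖(y,z)‖² = yz), fix r, R > 0, let a = (0,0), and suppose points b, c, d, e ∈ ℝ² satisfy: ‖b‖² = ‖c‖² = -r², ‖b - e‖² = ‖c - e‖² = R², b ≠ c, ‖e‖² ≠ 0, and d = b + c - e. Then d = -((R² + r²)/‖e‖²)·e. -/
/-!
Writing `B` for the polar form of `q`, the two hyperbolae meet on their radical axis
`B x e = q e - r² - R²`, so `b - c` is `B`-orthogonal to `e`; it is also orthogonal to `b + c`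
since `q b = q c`. As `e` is not null and `b ≠ c`, the orthogonal complement of `b - c` in the
plane is the line through `e`, so `b + c` is the multiple of `e` fixed by its value `B (b + c) e`.
-/

/-- Minkowski quadratic form in lightlike coordinates: `q (y,z) = y * z`. -/
def minkQ (α : ℝ × ℝ) : ℝ := α.1 * α.2

/-- The polar form `minkQ (x + y) - minkQ x - minkQ y`. -/
def minkPolar (x y : ℝ × ℝ) : ℝ := x.1 * y.2 + x.2 * y.1

lemma minkPolar_self (x : ℝ × ℝ) : minkPolar x x = 2 * minkQ x := by
  simp only [minkPolar, minkQ]; ring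

lemma minkQ_sub (x y : ℝ × ℝ) : minkQ (x - y) = minkQ x - minkPolar x y + minkQ y := by
  simp only [minkQ, minkPolar, Prod.fst_sub, Prod.snd_sub]; ring

lemma minkPolar_sub_left (x y z : ℝ × ℝ) :
    minkPolar (x - y) z = minkPolar x z - minkPolar y z := by
  simp only [minkPolar, Prod.fst_sub, Prod.snd_sub]; ring

lemma minkPolar_add_left (x y z : ℝ × ℝ) :
    minkPolar (x + y) z = minkPolar x z + minkPolar y z := by
  simp only [minkPolar, Prod.fst_add, Prod.snd_add]; ring

lemma minkPolar_sub_add (x y : ℝ × ℝ) :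
    minkPolar (x - y) (x + y) = 2 * (minkQ x - minkQ y) := by
  simp only [minkPolar, minkQ, Prod.fst_sub, Prod.snd_sub, Prod.fst_add, Prod.snd_add]; ring

lemma minkPolar_eq_of_minkQ_eq {x e : ℝ × ℝ} {s t : ℝ} (hx : minkQ x = s)
    (hxe : minkQ (x - e) = t) : minkPolar x e = minkQ e + s - t := by
  rw [minkQ_sub, hx] at hxe
  linarith

lemma eq_smul_of_minkPolar_eq_zero {u v e : ℝ × ℝ} (hu : u ≠ 0) (he : minkQ e ≠ 0)
    (hue : minkPolar u e = 0) (huv : minkPolar u v = 0) :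
    v = (minkPolar v e / minkPolar e e) • e := by
  have hee : minkPolar e e ≠ 0 := by
    rw [minkPolar_self]; exact mul_ne_zero two_ne_zero he
  simp only [minkPolar, minkQ] at *
  have he₁ : e.1 ≠ 0 := left_ne_zero_of_mul he
  have he₂ : e.2 ≠ 0 := right_ne_zero_of_mul he
  have hdet : v.1 * e.2 = v.2 * e.1 := by
    by_contra hne
    apply hu
    have hu₁ : u.1 * (v.1 * e.2 - v.2 * e.1) = 0 := by linear_combination v.1 * hue - e.1 * huv
    have hu₂ : u.2 * (v.1 * e.2 - v.2 * e.1) = 0 := by linear_combination e.2 * huv - v.2 * hue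
    exact Prod.ext (by simpa [sub_ne_zero.mpr hne] using hu₁)
      (by simpa [sub_ne_zero.mpr hne] using hu₂)
  ext
  · rw [Prod.smul_fst, smul_eq_mul, div_mul_eq_mul_div, eq_div_iff hee]
    linear_combination e.1 * hdet
  · rw [Prod.smul_snd, smul_eq_mul, div_mul_eq_mul_div, eq_div_iff hee]
    linear_combination -e.2 * hdet

theorem minkowski_peaucellier_inversion_general (r R : ℝ)
    (b c d e : ℝ × ℝ)
    (hb : minkQ b = -r ^ 2) (hc : minkQ c = -r ^ 2)
    (hbe : minkQ (b - e) = R ^ 2) (hce : minkQ (c - e) = R ^ 2)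
    (hbc : b ≠ c) (he : minkQ e ≠ 0) (hd : d = b + c - e) :
    d = (-((R ^ 2 + r ^ 2) / minkQ e)) • e := by
  have hb_axis := minkPolar_eq_of_minkQ_eq hb hbe
  have hc_axis := minkPolar_eq_of_minkQ_eq hc hce
  have hsum : b + c = (minkPolar (b + c) e / minkPolar e e) • e := by
    refine eq_smul_of_minkPolar_eq_zero (sub_ne_zero.mpr hbc) he ?_ ?_
    · rw [minkPolar_sub_left, hb_axis, hc_axis, sub_self]
    · rw [minkPolar_sub_add, hb, hc, sub_self, mul_zero]
  have hcoeff : minkPolar (b + c) e / minkPolar e e - 1 = -((R ^ 2 + r ^ 2) / minkQ e) := by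
    rw [minkPolar_add_left, hb_axis, hc_axis, minkPolar_self]
    field_simp
    ring
  rw [hd, hsum, ← hcoeff, sub_smul, one_smul]

/-- Functional equation of the Peaucellier inversor in the Minkowski plane: with
`a = 0`, `b, c` on both hyperbolae and `d` the fourth parallelogram vertex,
the linkage computes `e ↦ -((R² + r²)/‖e‖²)·e`. -/
theorem minkowski_peaucellier_inversion (r R : ℝ) (hr : 0 < r) (hR : 0 < R)
    (b c d e : ℝ × ℝ)
    (hb : minkQ b = -r ^ 2) (hc : minkQ c = -r ^ 2)
    (hbe : minkQ (b - e) = R ^ 2) (hce : minkQ (c - e) = R ^ 2)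
    (hbc : b ≠ c) (he : minkQ e ≠ 0) (hd : d = b + c - e) :
    d = (-((R ^ 2 + r ^ 2) / minkQ e)) • e :=
  minkowski_peaucellier_inversion_general r R b c d e hb hc hbe hce hbc he hd
end

section
/- In lightlike coordinates (y,z) on the Minkowski plane with q(y,z) = yz, fix r, R > 0 and let e ∈ ℝ² with q(e) ≠ 0, and set d = -((R² + r²)/q(e))·e. Then d lies on the hyperbola {γ : (y_γ + 1)(z_γ - 1) = -1} if and only if y_e - z_e = -(R² + r²). -/
/-!
The hyperbola `(y + 1)(z - 1) = -1` is the conic `q γ = y_γ - z_γ`. Along the ray through `e`,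
`q` is quadratic and `y - z` is linear in the scalar, so `c • e` lies on it exactly when
`c * q e = y_e - z_e`; for the Peaucellier scalar `c = -(R² + r²)/q e` this is the line
`y_e - z_e = -(R² + r²)`.
-/

lemma minkQ_smul (c : ℝ) (α : ℝ × ℝ) : minkQ (c • α) = c ^ 2 * minkQ α := by
  simp only [minkQ, Prod.smul_fst, Prod.smul_snd, smul_eq_mul]
  ring

lemma hyperbola_iff_minkQ_eq (γ : ℝ × ℝ) :
    (γ.1 + 1) * (γ.2 - 1) = -1 ↔ minkQ γ = γ.1 - γ.2 := by
  unfold minkQ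
  constructor <;> intro h <;> linarith

lemma minkQ_smul_eq_sub_iff {c : ℝ} (hc : c ≠ 0) (e : ℝ × ℝ) :
    minkQ (c • e) = (c • e).1 - (c • e).2 ↔ c * minkQ e = e.1 - e.2 := by
  rw [minkQ_smul, Prod.smul_fst, Prod.smul_snd, smul_eq_mul, smul_eq_mul, ← mul_sub, pow_two,
    mul_assoc, mul_right_inj' hc]

theorem minkowski_peaucellier_line_general (r R : ℝ) (hr : 0 < r)
    (e d : ℝ × ℝ) (he : minkQ e ≠ 0)
    (hd : d = (-((R ^ 2 + r ^ 2) / minkQ e)) • e) :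
    ((d.1 + 1) * (d.2 - 1) = -1) ↔ e.1 - e.2 = -(R ^ 2 + r ^ 2) := by
  have hs : R ^ 2 + r ^ 2 ≠ 0 := by positivity
  have hc : -((R ^ 2 + r ^ 2) / minkQ e) ≠ 0 := neg_ne_zero.mpr (div_ne_zero hs he)
  have hcq : -((R ^ 2 + r ^ 2) / minkQ e) * minkQ e = -(R ^ 2 + r ^ 2) := by
    rw [neg_mul, div_mul_cancel₀ _ he]
  rw [hd, hyperbola_iff_minkQ_eq, minkQ_smul_eq_sub_iff hc, hcq, eq_comm]

/-- The Peaucellier image `d = -((R²+r²)/q(e))·e` lies on the hyperbola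
`(y+1)(z-1) = -1` if and only if `y_e - z_e = -(R² + r²)`. -/
theorem minkowski_peaucellier_line (r R : ℝ) (hr : 0 < r) (hR : 0 < R)
    (e d : ℝ × ℝ) (he : minkQ e ≠ 0)
    (hd : d = (-((R ^ 2 + r ^ 2) / minkQ e)) • e) :
    ((d.1 + 1) * (d.2 - 1) = -1) ↔ e.1 - e.2 = -(R ^ 2 + r ^ 2) :=
  minkowski_peaucellier_line_general r R hr e d he hd
end
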